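/- arXiv:1810.00176 — 7 statements merged into one kernel-verified Lean document; each statement's English description precedes it below -/
import Mathlib

section
/- Let S be a commutative ring with 1 ≠ 0, and let p(X) = p₀ + p₁X + ⋯ + pₘXᵐ be a Laurent polynomial in S[X, X⁻¹] whose constant coefficient p₀ and leading coefficient pₘ are units of S. Then the quotient ring T = S[X, X⁻¹]/(p(X)), viewed as an S-module, is free of rank m. -/
/-!
Write `p` as the image of a polynomial `q ∈ S[X]` of degree `m`; scaling by `pₘ⁻¹` makes `q`
monic without changing the ideal. Since `S[T;T⁻¹]` is the localization of `S[X]` at `X` and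
localization commutes with quotients, `S[T;T⁻¹]/(q)` is the localization of `S[X]/(q)` at `X`.
From `q = X · q₁ + p₀` with `p₀` a unit, `X` is already invertible modulo `q`, so
`S[T;T⁻¹]/(q) ≅ S[X]/(q)`, which is free with basis `1, X, …, X^(m-1)`.
-/

open LaurentPolynomial Polynomial

namespace Polynomial

variable {R : Type*} [CommRing R]

theorem isUnit_of_aeval_eq_zero_of_isUnit_coeff_zero {A : Type*} [CommRing A] [Algebra R A]
    {q : R[X]} (hq : IsUnit (q.coeff 0)) {a : A} (ha : aeval a q = 0) : IsUnit a := by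
  have h := congrArg (aeval a) (X_mul_divX_add q)
  rw [map_add, map_mul, aeval_X, aeval_C, ha, ← eq_neg_iff_add_eq_zero] at h
  exact isUnit_of_mul_isUnit_left (h ▸ (hq.map (algebraMap R A)).neg)

theorem isUnit_mk_X_of_mem_of_isUnit_coeff_zero {I : Ideal R[X]} {q : R[X]} (hqI : q ∈ I)
    (hq : IsUnit (q.coeff 0)) : IsUnit (Ideal.Quotient.mk I X) := by
  refine isUnit_of_aeval_eq_zero_of_isUnit_coeff_zero hq ?_
  rwa [← Ideal.Quotient.mkₐ_eq_mk R, aeval_algHom_apply, aeval_X_left_apply,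
    Ideal.Quotient.mkₐ_eq_mk, Ideal.Quotient.eq_zero_iff_mem]

noncomputable def quotientEquivLaurentQuotient (I : Ideal R[X])
    (hX : IsUnit (Ideal.Quotient.mk I X)) :
    (R[X] ⧸ I) ≃ₐ[R] R[T;T⁻¹] ⧸ I.map (algebraMap R[X] R[T;T⁻¹]) :=
  AlgEquiv.ofRingEquiv (f := (IsLocalization.atUnits (R[X] ⧸ I)
    (Algebra.algebraMapSubmonoid _ (Submonoid.powers (X : R[X])))
    (by rwa [Algebra.algebraMapSubmonoid, Submonoid.map_powers, Submonoid.powers_le])).toRingEquiv)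
    fun r => by
      change algebraMap (R[X] ⧸ I) (R[T;T⁻¹] ⧸ I.map (algebraMap R[X] R[T;T⁻¹]))
        (algebraMap R (R[X] ⧸ I) r) = _
      rw [← Ideal.Quotient.mk_algebraMap, Ideal.Quotient.algebraMap_quotient_map_quotient,
        ← Ideal.Quotient.mk_algebraMap]
      simp [algebraMap_eq_toLaurent]

end Polynomial

namespace LaurentPolynomial

variable {R : Type*} [CommRing R] [Nontrivial R]

theorem free_and_rank_quotient_span_toLaurent_of_monic {q : R[X]} (hm : q.Monic)
    (h0 : IsUnit (q.coeff 0)) :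
    Module.Free R (R[T;T⁻¹] ⧸ Ideal.span {toLaurent q}) ∧
      Module.rank R (R[T;T⁻¹] ⧸ Ideal.span {toLaurent q}) = q.natDegree := by
  have hspan : (Ideal.span {q}).map (algebraMap R[X] R[T;T⁻¹]) = Ideal.span {toLaurent q} := by
    rw [Ideal.map_span, Set.image_singleton, algebraMap_eq_toLaurent]
  have hX := isUnit_mk_X_of_mem_of_isUnit_coeff_zero (Ideal.mem_span_singleton_self q) h0
  let e : AdjoinRoot q ≃ₗ[R] R[T;T⁻¹] ⧸ Ideal.span {toLaurent q} :=
    ((quotientEquivLaurentQuotient _ hX).trans (Ideal.quotientEquivAlgOfEq R hspan)).toLinearEquiv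
  let b := (AdjoinRoot.powerBasis' hm).basis.map e
  exact ⟨.of_basis b, by rw [rank_eq_card_basis b, Fintype.card_fin, AdjoinRoot.powerBasis'_dim]⟩

theorem free_and_rank_quotient_span_toLaurent {q : R[X]} (hlead : IsUnit q.leadingCoeff)
    (h0 : IsUnit (q.coeff 0)) :
    Module.Free R (R[T;T⁻¹] ⧸ Ideal.span {toLaurent q}) ∧
      Module.rank R (R[T;T⁻¹] ⧸ Ideal.span {toLaurent q}) = q.natDegree := by
  let u : Rˣ := hlead.unit⁻¹
  have hspan : Ideal.span {toLaurent (u • q)} = Ideal.span {toLaurent q} := by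
    rw [Units.smul_def, ← toLaurentAlg_apply, map_smul, smul_eq_C_mul,
      Ideal.span_singleton_mul_left_unit (u.isUnit.map C), toLaurentAlg_apply]
  have hdeg : (u • q).natDegree = q.natDegree :=
    natDegree_smul_of_smul_regular q (isSMulRegular_of_group u)
  rw [← hspan, ← hdeg]
  exact free_and_rank_quotient_span_toLaurent_of_monic
    (monic_of_isUnit_leadingCoeff_inv_smul hlead) (by simpa only [coeff_smul, isUnit_smul_iff])

end LaurentPolynomial

/-- If `p = p₀ + p₁X + ⋯ + pₘXᵐ` is a Laurent polynomial over a nontrivial commutative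
ring `S` whose constant coefficient `p₀` and leading coefficient `pₘ` are units, then
`S[X,X⁻¹]/(p)` is a free `S`-module of rank `m`. -/
theorem laurent_quotient_free_of_rank (S : Type*) [CommRing S] [Nontrivial S]
    (m : ℕ) (c : ℕ → S) (hc0 : IsUnit (c 0)) (hcm : IsUnit (c m))
    (p : LaurentPolynomial S)
    (hp : p = ∑ i ∈ Finset.range (m + 1), LaurentPolynomial.C (c i) * T (i : ℤ)) :
    Module.Free S (LaurentPolynomial S ⧸ Ideal.span {p}) ∧
      Module.rank S (LaurentPolynomial S ⧸ Ideal.span {p}) = m := by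
  set q : S[X] := ∑ i ∈ Finset.range (m + 1), Polynomial.C (c i) * X ^ i
  have hq : toLaurent q = p := by simp [q, hp]
  have hcoeff (i : ℕ) : q.coeff i = if i ≤ m then c i else 0 := by simp [q]
  have hdeg : q.natDegree = m :=
    natDegree_eq_of_le_of_coeff_ne_zero
      (natDegree_le_iff_coeff_eq_zero.2 fun i hi => by rw [hcoeff, if_neg (by omega)])
      (by simpa [hcoeff] using hcm.ne_zero)
  rw [← hq, ← hdeg]
  exact free_and_rank_quotient_span_toLaurent (by simpa [leadingCoeff, hdeg, hcoeff])
    (by simpa [hcoeff])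
end

section
/- Let S be a commutative ring with 1 ≠ 0 and p(X) = p₀ + p₁X + ⋯ + pₘXᵐ ∈ S[X, X⁻¹] with p₀ and pₘ units of S. Then the images of the monomials 1, X, ..., X^{m-1} form an S-basis of S[X, X⁻¹]/(p(X)). -/
/-! `S[X,X⁻¹]` is the localization of `S[X]` at `X`, and localization commutes with quotients,
so `S[X,X⁻¹]/(p)` is the localization of `S[X]/(p)` at `X`. As `p₀` is a unit, `X` is already
invertible in `S[X]/(p)`, so this localization is `S[X]/(p)` itself. As `pₘ` is a unit, `p` is
associated to a monic polynomial of degree `m`, whence the power basis `1, X, …, X^(m-1)`. -/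

open LaurentPolynomial Polynomial

section

variable {R : Type*} [CommRing R]

theorem AdjoinRoot.isUnit_root_of_isUnit_coeff_zero {P : R[X]} (h : IsUnit (P.coeff 0)) :
    IsUnit (root P) := by
  have hP : root P * mk P P.divX + of P (P.coeff 0) = 0 := by
    rw [← mk_X, ← mk_C, ← map_mul, ← map_add, X_mul_divX_add, mk_self]
  exact isUnit_of_mul_isUnit_left (eq_neg_of_add_eq_zero_left hP ▸ (h.map (of P)).neg)

theorem LaurentPolynomial.bijective_quotientMapₐ_toLaurentAlg {I : Ideal R[X]}
    (hX : IsUnit (Ideal.Quotient.mk I X)) :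
    Function.Bijective (Ideal.quotientMapₐ (I.map (toLaurent : R[X] →+* R[T;T⁻¹]))
      toLaurentAlg Ideal.le_comap_map) := by
  have hM : Algebra.algebraMapSubmonoid (R[X] ⧸ I) (Submonoid.powers (X : R[X])) ≤
      IsUnit.submonoid (R[X] ⧸ I) := by
    rintro _ ⟨_, ⟨n, rfl⟩, rfl⟩
    exact hX.pow n
  exact (IsLocalization.atUnits (R[X] ⧸ I) _
    (S := R[T;T⁻¹] ⧸ I.map (algebraMap R[X] R[T;T⁻¹])) hM).bijective

namespace AdjoinRoot

noncomputable def equivLaurentQuotient {P : R[X]} (h : IsUnit (P.coeff 0)) :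
    AdjoinRoot P ≃ₐ[R] R[T;T⁻¹] ⧸ Ideal.span {toLaurent P} :=
  (AlgEquiv.ofBijective _ (bijective_quotientMapₐ_toLaurentAlg
    (isUnit_root_of_isUnit_coeff_zero h))).trans
    (Ideal.quotientEquivAlgOfEq R (by rw [Ideal.map_span, Set.image_singleton]))

theorem equivLaurentQuotient_mk {P : R[X]} (h : IsUnit (P.coeff 0)) (f : R[X]) :
    equivLaurentQuotient h (mk P f) = Ideal.Quotient.mk _ (toLaurent f) :=
  rfl

theorem equivLaurentQuotient_root {P : R[X]} (h : IsUnit (P.coeff 0)) :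
    equivLaurentQuotient h (root P) = Ideal.Quotient.mk _ (T 1) := by
  rw [← mk_X, equivLaurentQuotient_mk, toLaurent_X]

end AdjoinRoot

namespace LaurentPolynomial

noncomputable def quotientPowerBasisOfMonic {P : R[X]} (hm : P.Monic) (h0 : IsUnit (P.coeff 0)) :
    PowerBasis R (R[T;T⁻¹] ⧸ Ideal.span {toLaurent P}) :=
  (AdjoinRoot.powerBasis' hm).map (AdjoinRoot.equivLaurentQuotient h0)

theorem quotientPowerBasisOfMonic_basis_apply {P : R[X]} (hm : P.Monic) (h0 : IsUnit (P.coeff 0))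
    (i : Fin (quotientPowerBasisOfMonic hm h0).dim) :
    (quotientPowerBasisOfMonic hm h0).basis i = Ideal.Quotient.mk _ (T i) := by
  rw [PowerBasis.basis_eq_pow]
  unfold quotientPowerBasisOfMonic
  rw [PowerBasis.map_gen, AdjoinRoot.powerBasis'_gen, AdjoinRoot.equivLaurentQuotient_root,
    ← map_pow, T_pow, mul_one]

theorem exists_basis_quotient_span_toLaurent {P : R[X]} (hn : IsUnit P.leadingCoeff)
    (h0 : IsUnit (P.coeff 0)) :
    ∃ b : Module.Basis (Fin P.natDegree) R (R[T;T⁻¹] ⧸ Ideal.span {toLaurent P}),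
      ∀ i, b i = Ideal.Quotient.mk _ (T i) := by
  obtain ⟨u, hu⟩ := hn
  set Q := Polynomial.C (↑u⁻¹ : R) * P
  have hQ : Q.Monic := monic_C_mul_of_mul_leadingCoeff_eq_one (by rw [← hu, Units.inv_mul])
  have hQ0 : IsUnit (Q.coeff 0) := by
    rw [coeff_C_mul]
    exact u⁻¹.isUnit.mul h0
  have hdeg : Q.natDegree = P.natDegree := natDegree_C_mul_of_isUnit u⁻¹.isUnit P
  have hspan : Ideal.span {toLaurent Q} = Ideal.span {toLaurent P} := by
    rw [map_mul, toLaurent_C,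
      Ideal.span_singleton_mul_left_unit (u⁻¹.isUnit.map LaurentPolynomial.C)]
  rw [← hspan, ← hdeg]
  exact ⟨_, quotientPowerBasisOfMonic_basis_apply hQ hQ0⟩

end LaurentPolynomial

theorem Polynomial.coeff_sum_range_C_mul_X_pow (c : ℕ → R) (n k : ℕ) :
    (∑ i ∈ Finset.range n, C (c i) * X ^ i).coeff k = if k < n then c k else 0 := by
  simp [finsetSum_coeff, coeff_C_mul, coeff_X_pow]

theorem Polynomial.natDegree_sum_range_C_mul_X_pow {c : ℕ → R} {n : ℕ} (hc : c n ≠ 0) :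
    (∑ i ∈ Finset.range (n + 1), C (c i) * X ^ i).natDegree = n := by
  refine natDegree_eq_of_le_of_coeff_ne_zero ?_ (by simpa [coeff_sum_range_C_mul_X_pow])
  exact natDegree_le_iff_coeff_eq_zero.2 fun k hk =>
    by rw [coeff_sum_range_C_mul_X_pow, if_neg (by omega)]

end

/-- If `p = p₀ + p₁X + ⋯ + pₘXᵐ` is a Laurent polynomial over a nontrivial commutative
ring `S` with `p₀` and `pₘ` units of `S`, then the images of `1, X, …, X^(m-1)` form an
`S`-basis of `S[X,X⁻¹]/(p)`. -/
theorem laurent_quotient_basis (S : Type*) [CommRing S] [Nontrivial S]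
    (m : ℕ) (c : ℕ → S) (hc0 : IsUnit (c 0)) (hcm : IsUnit (c m))
    (p : LaurentPolynomial S)
    (hp : p = ∑ i ∈ Finset.range (m + 1), LaurentPolynomial.C (c i) * T (i : ℤ)) :
    ∃ b : Module.Basis (Fin m) S (LaurentPolynomial S ⧸ Ideal.span {p}),
      ∀ i : Fin m, b i = Ideal.Quotient.mk (Ideal.span {p}) (T (i : ℤ)) := by
  set P := ∑ i ∈ Finset.range (m + 1), Polynomial.C (c i) * X ^ i
  have hPp : toLaurent P = p := by simp [P, hp]
  have hdeg : P.natDegree = m := natDegree_sum_range_C_mul_X_pow hcm.ne_zero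
  have hlead : P.leadingCoeff = c m := by
    rw [leadingCoeff, hdeg, coeff_sum_range_C_mul_X_pow, if_pos m.lt_succ_self]
  have hcoeff0 : P.coeff 0 = c 0 := by
    rw [coeff_sum_range_C_mul_X_pow, if_pos m.succ_pos]
  obtain ⟨b, hb⟩ := exists_basis_quotient_span_toLaurent (hlead ▸ hcm) (hcoeff0 ▸ hc0)
  rw [← hPp, ← hdeg]
  exact ⟨b, hb⟩
end

section
/- Let R = ℤ[s, s⁻¹, t, t⁻¹]. Then the additive group of R/(R·(1 − s + s²) + R·((1 + st)(1 − t))) is free abelian of rank 4. -/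
/-- `R = ℤ[s,s⁻¹,t,t⁻¹]`, the group ring of the free abelian group of rank 2. -/
noncomputable abbrev GroupRingZ2 : Type := AddMonoidAlgebra ℤ (ℤ × ℤ)

/-- The generator `s` of the group ring. -/
noncomputable def sGen : GroupRingZ2 := AddMonoidAlgebra.single (1, 0) 1

/-- The generator `t` of the group ring. -/
noncomputable def tGen : GroupRingZ2 := AddMonoidAlgebra.single (0, 1) 1

/-!
In the quotient, `s² - s + 1 = 0` makes `s` a unit with inverse `1 - s`, and multiplying the
second relation by `1 - s` turns it into `t² = s t + (1 - s)`, whose constant term is a unit, so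
`t` is a unit as well. Hence the quotient is `ℤ[ζ][r] / (r² - ζ r - (1 - ζ))` with `ζ` a
primitive sixth root of unity: two successive monic quadratic extensions of `ℤ`, free of rank
`2 · 2 = 4`.
-/

open Polynomial

namespace MonoidHom

theorem ext_mint_prod {M : Type*} [Monoid M] {f g : Multiplicative (ℤ × ℤ) →* M}
    (h₁ : f (.ofAdd (1, 0)) = g (.ofAdd (1, 0))) (h₂ : f (.ofAdd (0, 1)) = g (.ofAdd (0, 1))) :
    f = g := by
  have hl : f.comp (AddMonoidHom.inl ℤ ℤ).toMultiplicative =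
      g.comp (AddMonoidHom.inl ℤ ℤ).toMultiplicative := ext_mint h₁
  have hr : f.comp (AddMonoidHom.inr ℤ ℤ).toMultiplicative =
      g.comp (AddMonoidHom.inr ℤ ℤ).toMultiplicative := ext_mint h₂
  refine MonoidHom.ext fun x => ?_
  have hx : x = .ofAdd (x.toAdd.1, 0) * .ofAdd (0, x.toAdd.2) := by simp [← ofAdd_add]
  rw [hx, map_mul, map_mul]
  exact congr($(DFunLike.congr_fun hl (.ofAdd x.toAdd.1)) *
    $(DFunLike.congr_fun hr (.ofAdd x.toAdd.2)))

end MonoidHom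

namespace AddMonoidAlgebra

variable {k A : Type*} [CommSemiring k]

theorem algHom_ext_int_prod [Semiring A] [Algebra k A]
    {f g : AddMonoidAlgebra k (ℤ × ℤ) →ₐ[k] A}
    (h₁ : f (single (1, 0) 1) = g (single (1, 0) 1))
    (h₂ : f (single (0, 1) 1) = g (single (0, 1) 1)) : f = g :=
  (lift k A (ℤ × ℤ)).symm.injective (MonoidHom.ext_mint_prod h₁ h₂)

noncomputable def liftUnitPair [CommSemiring A] [Algebra k A] (u v : Aˣ) :
    AddMonoidAlgebra k (ℤ × ℤ) →ₐ[k] A :=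
  lift k A (ℤ × ℤ) <| (Units.coeHom A).comp <|
    ((zpowersHom Aˣ u).coprod (zpowersHom Aˣ v)).comp
      (MulEquiv.prodMultiplicative ℤ ℤ).toMonoidHom

theorem liftUnitPair_single [CommSemiring A] [Algebra k A] (u v : Aˣ) (a b : ℤ) :
    liftUnitPair (k := k) u v (single (a, b) 1) = ↑(u ^ a * v ^ b) := by
  simp [liftUnitPair]

end AddMonoidAlgebra

namespace AdjoinRoot

variable {R : Type*} [CommRing R] {f : R[X]} {g : (AdjoinRoot f)[X]}

noncomputable def towerBasis (hf : f.Monic) (hg : g.Monic) :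
    Module.Basis (Fin f.natDegree × Fin g.natDegree) R (AdjoinRoot g) :=
  (powerBasis' hf).basis.smulTower (powerBasis' hg).basis

theorem rank_tower [StrongRankCondition R] (hf : f.Monic) (hg : g.Monic) :
    Module.rank R (AdjoinRoot g) = f.natDegree * g.natDegree := by
  simp [rank_eq_card_basis (towerBasis hf hg)]

end AdjoinRoot

noncomputable def eisensteinPoly : ℤ[X] := X ^ 2 - X + 1

theorem eisensteinPoly_monic : eisensteinPoly.Monic := by
  unfold eisensteinPoly; monicity!

theorem eisensteinPoly_natDegree : eisensteinPoly.natDegree = 2 := by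
  unfold eisensteinPoly; compute_degree!

noncomputable abbrev EisensteinRing : Type := AdjoinRoot eisensteinPoly

instance : Nontrivial EisensteinRing :=
  AdjoinRoot.nontrivial _ <| by
    rw [degree_eq_natDegree eisensteinPoly_monic.ne_zero, eisensteinPoly_natDegree]; decide

noncomputable abbrev zeta : EisensteinRing := AdjoinRoot.root _

theorem zeta_sq_sub_add_one : zeta ^ 2 - zeta + 1 = 0 := by
  have h := AdjoinRoot.eval₂_root eisensteinPoly
  rwa [eisensteinPoly, eval₂_add, eval₂_sub, eval₂_pow, eval₂_X, eval₂_one] at h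

noncomputable def modelPoly : EisensteinRing[X] := X ^ 2 - (C zeta * X + C (1 - zeta))

theorem modelPoly_monic : modelPoly.Monic :=
  monic_X_pow_sub (degree_linear_le.trans_lt (by decide))

theorem modelPoly_natDegree : modelPoly.natDegree = 2 := by
  unfold modelPoly; compute_degree!

noncomputable abbrev ModelRing : Type := AdjoinRoot modelPoly

instance : Module.Free ℤ ModelRing :=
  .of_basis (AdjoinRoot.towerBasis eisensteinPoly_monic modelPoly_monic)

theorem rank_modelRing : Module.rank ℤ ModelRing = 4 := by
  rw [AdjoinRoot.rank_tower eisensteinPoly_monic modelPoly_monic, eisensteinPoly_natDegree,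
    modelPoly_natDegree]
  norm_num

noncomputable def relIdeal : Ideal GroupRingZ2 :=
  Ideal.span {1 - sGen + sGen ^ 2, (1 + sGen * tGen) * (1 - tGen)}

local notation "Q" => GroupRingZ2 ⧸ relIdeal

noncomputable abbrev modelZeta : ModelRing := AdjoinRoot.of modelPoly zeta

noncomputable abbrev modelRoot : ModelRing := AdjoinRoot.root modelPoly

theorem modelZeta_sq_sub_add_one : modelZeta ^ 2 - modelZeta + 1 = 0 := by
  simpa using congrArg (AdjoinRoot.of modelPoly) zeta_sq_sub_add_one

theorem modelRoot_sq : modelRoot ^ 2 = modelZeta * modelRoot + (1 - modelZeta) := by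
  have h : AdjoinRoot.mk modelPoly (X ^ 2 - (C zeta * X + C (1 - zeta))) = 0 :=
    AdjoinRoot.mk_self
  simp only [map_sub, map_add, map_mul, map_pow, AdjoinRoot.mk_X, AdjoinRoot.mk_C,
    map_one] at h
  exact sub_eq_zero.mp h

noncomputable def zetaUnit : ModelRingˣ :=
  Units.mkOfMulEqOne modelZeta (1 - modelZeta)
    (by linear_combination -modelZeta_sq_sub_add_one)

noncomputable def rootUnit : ModelRingˣ :=
  Units.mkOfMulEqOne modelRoot (modelZeta * modelRoot - modelZeta ^ 2)
    (by linear_combination modelZeta * modelRoot_sq - modelZeta_sq_sub_add_one)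

noncomputable def toModel : GroupRingZ2 →ₐ[ℤ] ModelRing :=
  AddMonoidAlgebra.liftUnitPair zetaUnit rootUnit

theorem toModel_sGen : toModel sGen = modelZeta := by
  simp [toModel, sGen, AddMonoidAlgebra.liftUnitPair_single, zetaUnit]

theorem toModel_tGen : toModel tGen = modelRoot := by
  simp [toModel, tGen, AddMonoidAlgebra.liftUnitPair_single, rootUnit]

theorem relIdeal_le_ker_toModel : relIdeal ≤ RingHom.ker toModel := by
  refine Ideal.span_le.mpr ?_
  rintro x (rfl | rfl) <;>
    simp only [SetLike.mem_coe, RingHom.mem_ker, map_add, map_sub, map_mul, map_pow, map_one,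
      toModel_sGen, toModel_tGen]
  · linear_combination modelZeta_sq_sub_add_one
  · linear_combination (1 - modelRoot) * modelZeta_sq_sub_add_one - modelZeta * modelRoot_sq

noncomputable def quotToModel : Q →ₐ[ℤ] ModelRing :=
  Ideal.Quotient.liftₐ relIdeal toModel fun _ ha =>
    RingHom.mem_ker.mp (relIdeal_le_ker_toModel ha)

noncomputable abbrev quotS : Q := Ideal.Quotient.mk relIdeal sGen

noncomputable abbrev quotT : Q := Ideal.Quotient.mk relIdeal tGen

theorem quotS_sq_sub_add_one : quotS ^ 2 - quotS + 1 = 0 := by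
  have h : Ideal.Quotient.mk relIdeal (1 - sGen + sGen ^ 2) = 0 :=
    Ideal.Quotient.eq_zero_iff_mem.mpr (Ideal.subset_span (by simp))
  simp only [map_add, map_sub, map_pow, map_one] at h
  linear_combination h

theorem quotT_sq : quotT ^ 2 = quotS * quotT + (1 - quotS) := by
  have h : Ideal.Quotient.mk relIdeal ((1 + sGen * tGen) * (1 - tGen)) = 0 :=
    Ideal.Quotient.eq_zero_iff_mem.mpr (Ideal.subset_span (by simp))
  simp only [map_add, map_sub, map_mul, map_one] at h
  linear_combination (quotT ^ 2 - quotT) * quotS_sq_sub_add_one - (1 - quotS) * h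

noncomputable def eisensteinToQuot : EisensteinRing →+* Q :=
  AdjoinRoot.lift (Int.castRingHom Q) quotS (by
    simpa [eisensteinPoly] using quotS_sq_sub_add_one)

noncomputable def modelToQuot : ModelRing →+* Q :=
  AdjoinRoot.lift eisensteinToQuot quotT (by
    simp [modelPoly, eisensteinToQuot, quotT_sq])

theorem quotToModel_quotS : quotToModel quotS = modelZeta :=
  toModel_sGen

theorem quotToModel_quotT : quotToModel quotT = modelRoot :=
  toModel_tGen

theorem modelToQuot_modelZeta : modelToQuot modelZeta = quotS := by
  rw [modelToQuot, AdjoinRoot.lift_of, eisensteinToQuot, AdjoinRoot.lift_root]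

theorem modelToQuot_modelRoot : modelToQuot modelRoot = quotT := by
  rw [modelToQuot, AdjoinRoot.lift_root]

noncomputable def quotEquivModel : Q ≃ₐ[ℤ] ModelRing :=
  AlgEquiv.ofAlgHom quotToModel modelToQuot.toIntAlgHom
    (AlgHom.coe_ringHom_injective <| AdjoinRoot.ringHom_ext
      (AdjoinRoot.ringHom_ext (RingHom.ext_int _ _)
        (congrArg quotToModel modelToQuot_modelZeta |>.trans quotToModel_quotS))
      (congrArg quotToModel modelToQuot_modelRoot |>.trans quotToModel_quotT))
    (Ideal.Quotient.algHom_ext ℤ <| AddMonoidAlgebra.algHom_ext_int_prod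
      (congrArg modelToQuot quotToModel_quotS |>.trans modelToQuot_modelZeta)
      (congrArg modelToQuot quotToModel_quotT |>.trans modelToQuot_modelRoot))

/-- The additive group of `R/(R·(1 − s + s²) + R·((1 + st)(1 − t)))` is free abelian of
rank 4, where `R = ℤ[s,s⁻¹,t,t⁻¹]`.  (This computes the abelianisation of the derived
group of the Artin group of type `B₃`.) -/
theorem quotient_free_rank_four :
    Module.Free ℤ
        (GroupRingZ2 ⧸ Ideal.span {1 - sGen + sGen ^ 2, (1 + sGen * tGen) * (1 - tGen)}) ∧
      Module.rank ℤ
        (GroupRingZ2 ⧸ Ideal.span {1 - sGen + sGen ^ 2, (1 + sGen * tGen) * (1 - tGen)}) = 4 :=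
  ⟨.of_equiv quotEquivModel.symm.toLinearEquiv,
    quotEquivModel.toLinearEquiv.rank_eq.trans rank_modelRing⟩
end

section
/- Let R = ℤ[s, s⁻¹, t, t⁻¹] be the group ring of the free abelian group with basis {s, t}, and let d₁ : Rℓ → R be the R-linear map with d₁(bₖ) = 1 − s for 1 ≤ k ≤ ℓ−1 and d₁(b_ℓ) = 1 − t. Then ker d₁ is the free R-module with basis {b₁ − b₂, ..., b_{ℓ−2} − b_{ℓ−1}, (1 − t)·b_{ℓ−1} + (s − 1)·b_ℓ}. -/
/-- The `R`-linear map `Rⁱ → R` sending the `k`-th standard basis vector to `c k`. -/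
noncomputable def rowMap {R : Type*} [CommRing R] {ι : Type*} [Fintype ι] (c : ι → R) :
    (ι → R) →ₗ[R] R where
  toFun x := ∑ k, x k * c k
  map_add' x y := by simp [add_mul, Finset.sum_add_distrib]
  map_smul' r x := by simp [Finset.mul_sum, mul_assoc]

/-- The claimed basis of the kernel: the differences `b_k − b_{k+1}` for `k < ℓ`,
together with `(1 − t)·b_ℓ + (s − 1)·b_{ℓ+1}`. -/
noncomputable def kerBasisB (ℓ : ℕ) (k : Fin (ℓ + 1)) : Fin (ℓ + 2) → GroupRingZ2 :=
  if (k : ℕ) < ℓ then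
    (Pi.single k.castSucc 1 : Fin (ℓ + 2) → GroupRingZ2) -
      (Pi.single k.succ 1 : Fin (ℓ + 2) → GroupRingZ2)
  else
    (1 - tGen) • (Pi.single k.castSucc 1 : Fin (ℓ + 2) → GroupRingZ2) +
      (sGen - 1) • (Pi.single k.succ 1 : Fin (ℓ + 2) → GroupRingZ2)

/-!
In the domain `R`, `1 - t` is a nonzerodivisor and `1 - s` stays a nonzerodivisor modulo `1 - t`:
the endomorphism `killT` (`s ↦ s`, `t ↦ 1`) differs from the identity by multiples of `1 - t` and
fixes `1 - s`. Hence every relation `a (1 - s) + b (1 - t) = 0` is a multiple `c` of the Koszul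
relation `(1 - t, s - 1)`. With coordinates indexed from `0`, an `x ∈ ker d₁` thus satisfies
`∑_{k ≤ ℓ} x_k = c (1 - t)` and `x_{ℓ+1} = -c (1 - s)`, so `x - c ((1 - t) b_ℓ + (s - 1) b_{ℓ+1})`
has vanishing last coordinate and coordinate sum zero; it is therefore a combination of the
`b_j - b_ℓ`, which telescope into the differences `b_k - b_{k+1}`. Linear independence holds
because the first `ℓ + 1` coordinates of the family form a bidiagonal matrix with diagonal
`(1, …, 1, 1 - t)`.
-/

open Submodule

section SyzygiesOfRow

variable {R : Type*} [CommRing R] {p q : R}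

theorem exists_eq_mul_of_mul_add_mul_eq_zero (hq : q ∈ nonZeroDivisors R)
    (hpq : ∀ a, q ∣ a * p → q ∣ a) {a b : R} (h : a * p + b * q = 0) :
    ∃ c, a = c * q ∧ b = -(c * p) := by
  obtain ⟨c, rfl⟩ := hpq a ⟨-b, by linear_combination h⟩
  have hc : (c * p + b) * q = 0 := by linear_combination h
  exact ⟨c, mul_comm _ _, by
    linear_combination (mul_right_mem_nonZeroDivisors_eq_zero_iff hq).mp hc⟩

variable (p q) in
noncomputable def syzygyBasis (ℓ : ℕ) (k : Fin (ℓ + 1)) : Fin (ℓ + 2) → R :=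
  if (k : ℕ) < ℓ then Pi.single k.castSucc 1 - Pi.single k.succ 1
  else q • Pi.single k.castSucc 1 - p • Pi.single k.succ 1

variable {ℓ : ℕ}

theorem rowMap_single {ι : Type*} [Fintype ι] [DecidableEq ι] (c : ι → R) (i : ι) (r : R) :
    rowMap c (Pi.single i r) = r * c i := by
  simp [rowMap, Pi.single_apply, ite_mul, Finset.sum_ite_eq']

theorem rowMap_ite_apply (x : Fin (ℓ + 2) → R) :
    rowMap (fun k : Fin (ℓ + 2) => if (k : ℕ) < ℓ + 1 then p else q) x =
      (∑ k : Fin (ℓ + 1), x k.castSucc) * p + x (Fin.last _) * q := by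
  change ∑ k, x k * _ = _
  rw [Fin.sum_univ_castSucc, Finset.sum_mul]
  simp [Fin.is_le]

theorem syzygyBasis_mem_ker (k : Fin (ℓ + 1)) :
    syzygyBasis p q ℓ k ∈
      LinearMap.ker (rowMap fun k : Fin (ℓ + 2) => if (k : ℕ) < ℓ + 1 then p else q) := by
  rw [LinearMap.mem_ker, syzygyBasis]
  split_ifs with h
  · simp [rowMap_single, h, Fin.is_le]
  · simp [rowMap_single, h, Fin.is_le]
    ring

theorem syzygyBasis_apply_castSucc_of_lt {i j : Fin (ℓ + 1)} (h : j < i) :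
    syzygyBasis p q ℓ i j.castSucc = 0 := by
  have h1 : j.castSucc ≠ i.castSucc := by simpa using h.ne
  have h2 : j.castSucc ≠ i.succ := (Fin.castSucc_lt_succ_iff.mpr h.le).ne
  unfold syzygyBasis
  split_ifs <;> simp [h1, h2]

theorem syzygyBasis_apply_castSucc_self (i : Fin (ℓ + 1)) :
    syzygyBasis p q ℓ i i.castSucc = if (i : ℕ) < ℓ then 1 else q := by
  unfold syzygyBasis
  split_ifs <;> simp [Fin.castSucc_lt_succ.ne]

theorem linearIndependent_syzygyBasis (hq : q ∈ nonZeroDivisors R) :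
    LinearIndependent R (syzygyBasis p q ℓ) := by
  rw [Fintype.linearIndependent_iff]
  intro a ha k
  induction k using WellFoundedLT.induction with
  | _ k ih =>
    have hk := congrFun ha k.castSucc
    rw [Finset.sum_apply, Finset.sum_eq_single k] at hk
    · rw [Pi.smul_apply, syzygyBasis_apply_castSucc_self, smul_eq_mul] at hk
      split_ifs at hk
      · simpa using hk
      · exact (mul_right_mem_nonZeroDivisors_eq_zero_iff hq).mp hk
    · intro i _ hik
      rcases hik.lt_or_gt with hlt | hgt
      · simp [ih i hlt]
      · simp [syzygyBasis_apply_castSucc_of_lt hgt]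
    · simp

theorem single_sub_single_last_mem_span (j : Fin (ℓ + 1)) :
    Pi.single j.castSucc 1 - Pi.single (Fin.last ℓ).castSucc 1 ∈
      span R (Set.range (syzygyBasis p q ℓ)) := by
  induction j using Fin.reverseInduction with
  | last => simp
  | cast i ih =>
    have hi : syzygyBasis p q ℓ i.castSucc =
        Pi.single i.castSucc.castSucc 1 - Pi.single i.succ.castSucc 1 := by
      rw [syzygyBasis, if_pos (by simp), Fin.succ_castSucc]
    simpa using add_mem (subset_span (Set.mem_range.mpr ⟨i.castSucc, hi⟩)) ih

theorem ker_rowMap_le_span_syzygyBasis (hq : q ∈ nonZeroDivisors R)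
    (hpq : ∀ a, q ∣ a * p → q ∣ a) :
    LinearMap.ker (rowMap fun k : Fin (ℓ + 2) => if (k : ℕ) < ℓ + 1 then p else q) ≤
      span R (Set.range (syzygyBasis p q ℓ)) := by
  intro x hx
  rw [LinearMap.mem_ker, rowMap_ite_apply] at hx
  obtain ⟨c, hsum, hlast⟩ := exists_eq_mul_of_mul_add_mul_eq_zero hq hpq hx
  have hx : x = ∑ j : Fin (ℓ + 1), x j.castSucc •
      (Pi.single j.castSucc 1 - Pi.single (Fin.last ℓ).castSucc 1) +
      c • syzygyBasis p q ℓ (Fin.last ℓ) := by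
    have hsingle (i : Fin (ℓ + 2)) : Pi.single i (x i) = x i • Pi.single i 1 := by
      rw [← Pi.single_smul', smul_eq_mul, mul_one]
    conv_lhs => rw [← Finset.univ_sum_single x, Fin.sum_univ_castSucc]
    simp only [hsingle]
    simp only [syzygyBasis, Fin.val_last, lt_irrefl, if_false, Fin.succ_last,
      Nat.succ_eq_add_one, smul_sub, Finset.sum_sub_distrib, ← Finset.sum_smul, hsum, hlast]
    module
  rw [hx]
  exact add_mem (sum_mem fun j _ => smul_mem _ _ (single_sub_single_last_mem_span j))
    (smul_mem _ _ (subset_span ⟨_, rfl⟩))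

theorem ker_rowMap_eq_span_syzygyBasis (hq : q ∈ nonZeroDivisors R)
    (hpq : ∀ a, q ∣ a * p → q ∣ a) :
    LinearMap.ker (rowMap fun k : Fin (ℓ + 2) => if (k : ℕ) < ℓ + 1 then p else q) =
      span R (Set.range (syzygyBasis p q ℓ)) :=
  le_antisymm (ker_rowMap_le_span_syzygyBasis hq hpq)
    (span_le.mpr (Set.range_subset_iff.mpr syzygyBasis_mem_ker))

end SyzygiesOfRow

theorem Units.val_sub_one_dvd_zpow_sub_one {R : Type*} [Ring R] (u : Rˣ) (n : ℤ) :
    (u : R) - 1 ∣ ((u ^ n : Rˣ) : R) - 1 := by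
  cases n with
  | ofNat n => simpa using sub_one_dvd_pow_sub_one (u : R) n
  | negSucc n =>
    have hinv : (u : R) - 1 ∣ ((u⁻¹ : Rˣ) : R) - 1 :=
      ⟨-((u⁻¹ : Rˣ) : R), by rw [mul_neg, sub_mul, Units.mul_inv, one_mul, neg_sub]⟩
    rw [zpow_negSucc, ← inv_pow, Units.val_pow_eq_pow_val]
    exact hinv.trans (sub_one_dvd_pow_sub_one _ _)

namespace AddMonoidAlgebra

variable {k G : Type*} [Ring k]

theorem single_sub_one_dvd_single_zsmul_sub_one [AddGroup G] (g : G) (n : ℤ) :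
    single g (1 : k) - 1 ∣ single (n • g) 1 - 1 := by
  simpa [← map_zpow, of_apply] using
    Units.val_sub_one_dvd_zpow_sub_one ((of k G).toHomUnits (Multiplicative.ofAdd g)) n

theorem one_sub_single_ne_zero [Nontrivial k] [AddMonoid G] {g : G} (hg : g ≠ 0) :
    (1 - single g 1 : k[G]) ≠ 0 := by
  rw [sub_ne_zero, one_def, Ne, single_left_inj one_ne_zero]
  exact hg.symm

end AddMonoidAlgebra

section GroupRingZ2

open AddMonoidAlgebra

noncomputable def killT : GroupRingZ2 →+* GroupRingZ2 :=
  mapDomainRingHom ℤ ((AddMonoidHom.inl ℤ ℤ).comp (AddMonoidHom.fst ℤ ℤ))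

theorem killT_single (m n z : ℤ) : killT (single (m, n) z) = single (m, 0) z :=
  mapDomain_single

theorem killT_sGen : killT sGen = sGen :=
  killT_single 1 0 1

theorem killT_tGen : killT tGen = 1 :=
  (killT_single 0 1 1).trans one_def.symm

theorem one_sub_tGen_dvd_sub_killT (a : GroupRingZ2) : 1 - tGen ∣ a - killT a := by
  induction a using induction_linear with
  | zero => simp
  | add a b ha hb => simpa [add_sub_add_comm] using dvd_add ha hb
  | single mn z =>
    obtain ⟨m, n⟩ := mn
    have h : single (m, n) z - single (m, 0) z =
        single (m, 0) z * (single (n • ((0 : ℤ), (1 : ℤ))) 1 - 1) := by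
      rw [mul_sub, single_mul_single]
      simp
    have ht := single_sub_one_dvd_single_zsmul_sub_one (k := ℤ) ((0 : ℤ), (1 : ℤ)) n
    rw [← neg_dvd, neg_sub] at ht
    rw [killT_single, h]
    exact dvd_mul_of_dvd_right ht _

theorem one_sub_tGen_dvd_of_dvd_mul_one_sub_sGen {a : GroupRingZ2}
    (h : 1 - tGen ∣ a * (1 - sGen)) : 1 - tGen ∣ a := by
  obtain ⟨b, hb⟩ := h
  have hka : killT a * (1 - sGen) = 0 := by
    simpa [killT_sGen, killT_tGen] using congrArg killT hb
  have ha : killT a = 0 :=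
    (mul_eq_zero.mp hka).resolve_right (one_sub_single_ne_zero (by simp))
  simpa [ha] using one_sub_tGen_dvd_sub_killT a

end GroupRingZ2

theorem kerBasisB_eq_syzygyBasis (ℓ : ℕ) :
    kerBasisB ℓ = syzygyBasis (1 - sGen) (1 - tGen) ℓ := by
  funext k
  unfold kerBasisB syzygyBasis
  split_ifs
  · rfl
  · rw [← neg_sub 1 sGen, neg_smul, ← sub_eq_add_neg]

/-- Let `R = ℤ[s,s⁻¹,t,t⁻¹]` and let `d₁ : R^(ℓ+2) → R` send the first `ℓ+1` standard
basis vectors to `1 − s` and the last one to `1 − t`.  Then `ker d₁` is the free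
`R`-module with basis `b₁ − b₂, …, b_ℓ − b_{ℓ+1}, (1 − t)·b_{ℓ+1} + (s − 1)·b_{ℓ+2}`. -/
theorem ker_d1_type_B (ℓ : ℕ) :
    LinearMap.ker
        (rowMap fun k : Fin (ℓ + 2) => if (k : ℕ) < ℓ + 1 then 1 - sGen else 1 - tGen) =
        Submodule.span GroupRingZ2 (Set.range (kerBasisB ℓ)) ∧
      LinearIndependent GroupRingZ2 (kerBasisB ℓ) := by
  have hq : 1 - tGen ∈ nonZeroDivisors GroupRingZ2 :=
    mem_nonZeroDivisors_of_ne_zero (AddMonoidAlgebra.one_sub_single_ne_zero (by simp))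
  rw [kerBasisB_eq_syzygyBasis]
  exact ⟨ker_rowMap_eq_span_syzygyBasis hq fun _ => one_sub_tGen_dvd_of_dvd_mul_one_sub_sGen,
    linearIndependent_syzygyBasis hq⟩
end

section
/- Let R = ℤ[s, s⁻¹] and let M ⊆ R·u ⊕ R·v ⊕ R·w be the submodule generated by the six elements x₁ = (1−s)(u+v), x₂ = (1−s)(v+w), x₃ = (1−s)(u+v+w), y₁ = (1−s+s²)u, y₂ = (1−s+s²)v, y₃ = (1−s+s²)w, in the free R-module with basis {u, v, w}. Then M equals the whole module R·u ⊕ R·v ⊕ R·w. -/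
open LaurentPolynomial

/-- `R = ℤ[s,s⁻¹]`. -/
noncomputable abbrev LZ : Type := LaurentPolynomial ℤ

/-- `s ∈ ℤ[s,s⁻¹]`. -/
noncomputable def sL : LZ := T 1

/-- Basis vector `u` of `R³`. -/
noncomputable def uV : Fin 3 → LZ := Pi.single 0 1
/-- Basis vector `v` of `R³`. -/
noncomputable def vV : Fin 3 → LZ := Pi.single 1 1
/-- Basis vector `w` of `R³`. -/
noncomputable def wV : Fin 3 → LZ := Pi.single 2 1

/-- Let `R = ℤ[s,s⁻¹]` and let `u, v, w` be a basis of the free `R`-module `R³`.  The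
submodule generated by `(1−s)(u+v)`, `(1−s)(v+w)`, `(1−s)(u+v+w)`, `(1−s+s²)u`,
`(1−s+s²)v`, `(1−s+s²)w` is the whole module.  (This shows that the derived group of
the Artin group of type `A₄` is perfect.) -/
theorem span_eq_top_A4 :
    Submodule.span LZ
        {(1 - sL) • (uV + vV), (1 - sL) • (vV + wV), (1 - sL) • (uV + vV + wV),
          (1 - sL + sL ^ 2) • uV, (1 - sL + sL ^ 2) • vV, (1 - sL + sL ^ 2) • wV} = ⊤ := by
  set S := Submodule.span LZ
        {(1 - sL) • (uV + vV), (1 - sL) • (vV + wV), (1 - sL) • (uV + vV + wV),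
          (1 - sL + sL ^ 2) • uV, (1 - sL + sL ^ 2) • vV, (1 - sL + sL ^ 2) • wV} with hS
  have h1 : (1 - sL) • (uV + vV) ∈ S := Submodule.subset_span (Set.mem_insert _ _)
  have h2 : (1 - sL) • (vV + wV) ∈ S := Submodule.subset_span (Set.mem_insert_of_mem _ (Set.mem_insert _ _))
  have h3 : (1 - sL) • (uV + vV + wV) ∈ S := Submodule.subset_span (Set.mem_insert_of_mem _ (Set.mem_insert_of_mem _ (Set.mem_insert _ _)))
  have h4 : (1 - sL + sL ^ 2) • uV ∈ S := Submodule.subset_span (Set.mem_insert_of_mem _ (Set.mem_insert_of_mem _ (Set.mem_insert_of_mem _ (Set.mem_insert _ _))))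
  have h5 : (1 - sL + sL ^ 2) • vV ∈ S := Submodule.subset_span (Set.mem_insert_of_mem _ (Set.mem_insert_of_mem _ (Set.mem_insert_of_mem _ (Set.mem_insert_of_mem _ (Set.mem_insert _ _)))))
  have h6 : (1 - sL + sL ^ 2) • wV ∈ S := Submodule.subset_span (Set.mem_insert_of_mem _ (Set.mem_insert_of_mem _ (Set.mem_insert_of_mem _ (Set.mem_insert_of_mem _ (Set.mem_insert_of_mem _ rfl)))))
  have hu : uV ∈ S := by
    have := S.add_mem h4 (S.sub_mem (S.smul_mem sL h3) (S.smul_mem sL h2))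
    convert this using 1
    module
  have hw : wV ∈ S := by
    have := S.add_mem h6 (S.sub_mem (S.smul_mem sL h3) (S.smul_mem sL h1))
    convert this using 1
    module
  have hv : vV ∈ S := by
    have := S.add_mem h5 (S.sub_mem (S.smul_mem sL h1)
      (S.sub_mem (S.smul_mem sL h3) (S.smul_mem sL h2)))
    convert this using 1
    module
  rw [eq_top_iff]
  intro f _
  have hf : f = f 0 • uV + f 1 • vV + f 2 • wV := by
    funext i
    fin_cases i <;> simp [uV, vV, wV]
  rw [hf]
  exact S.add_mem (S.add_mem (S.smul_mem _ hu) (S.smul_mem _ hv)) (S.smul_mem _ hw)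
end

section
/- Let R = ℤ[s, s⁻¹] and let m, n, p be positive integers. In the free R-module with basis {u, v, w}, the submodule generated by (1−s)(u+v), (1−s)(v+w), (1−s)(u+v+w), (1−s+s²−⋯+s^{2m})u, (1−s+s²−⋯+s^{2n})v, and (1−s+s²−⋯+s^{2p})w equals the whole module. -/
open LaurentPolynomial

/-- The alternating sum `1 − s + s² − ⋯ + s^(2m)` (with `2m+1` terms). -/
noncomputable def altSum (m : ℕ) : LZ := ∑ i ∈ Finset.range (2 * m + 1), (-sL) ^ i

/-!
Setting `s = 1` sends `1 − s + s² − ⋯ + s^(2k)` to `1`, so each alternating sum is coprime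
to `1 − s`. Differences of the first three generators give `(1 − s)u`, `(1 − s)v`, `(1 − s)w`,
and a Bézout relation between `altSum k` and `1 − s` then recovers each basis vector from
its two multiples in the submodule.
-/

theorem Submodule.mem_of_isCoprime_of_smul_mem {R M : Type*} [CommSemiring R] [AddCommMonoid M]
    [Module R M] {N : Submodule R M} {a b : R} (hab : IsCoprime a b) {x : M}
    (ha : a • x ∈ N) (hb : b • x ∈ N) : x ∈ N := by
  obtain ⟨c, d, hcd⟩ := hab
  have hx : x = c • a • x + d • b • x := by rw [smul_smul, smul_smul, ← add_smul, hcd, one_smul]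
  rw [hx]
  exact N.add_mem (N.smul_mem c ha) (N.smul_mem d hb)

/-- The Bézout relation comes from grouping the terms as `1 − (s − s²) − ⋯ − (s^(2k−1) − s^(2k))`. -/
theorem sum_range_neg_pow_add_mul_sum_odd_pow {R : Type*} [CommRing R] (x : R) (k : ℕ) :
    ∑ i ∈ Finset.range (2 * k + 1), (-x) ^ i + (1 - x) * ∑ j ∈ Finset.range k, x ^ (2 * j + 1)
      = 1 := by
  induction k with
  | zero => simp
  | succ k ih =>
    rw [show 2 * (k + 1) + 1 = 2 * k + 1 + 1 + 1 by ring, Finset.sum_range_succ,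
      Finset.sum_range_succ, Finset.sum_range_succ (fun j ↦ x ^ (2 * j + 1)),
      Odd.neg_pow ⟨k, rfl⟩, Even.neg_pow ⟨k + 1, by ring⟩]
    linear_combination ih

theorem isCoprime_sum_range_neg_pow_one_sub {R : Type*} [CommRing R] (x : R) (k : ℕ) :
    IsCoprime (∑ i ∈ Finset.range (2 * k + 1), (-x) ^ i) (1 - x) :=
  ⟨1, ∑ j ∈ Finset.range k, x ^ (2 * j + 1), by
    linear_combination sum_range_neg_pow_add_mul_sum_odd_pow x k⟩

theorem isCoprime_altSum_one_sub_sL (k : ℕ) : IsCoprime (altSum k) (1 - sL) :=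
  isCoprime_sum_range_neg_pow_one_sub sL k

theorem span_smul_add_eq_span {R M : Type*} [CommRing R] [AddCommGroup M] [Module R M]
    {a b d c : R} (ha : IsCoprime a c) (hb : IsCoprime b c) (hd : IsCoprime d c) (u v w : M) :
    Submodule.span R {c • (u + v), c • (v + w), c • (u + v + w), a • u, b • v, d • w}
      = Submodule.span R {u, v, w} := by
  set N := Submodule.span R {c • (u + v), c • (v + w), c • (u + v + w), a • u, b • v, d • w}
  apply le_antisymm
  · refine Submodule.span_le.2 ?_
    have hu : u ∈ Submodule.span R {u, v, w} := Submodule.subset_span (by simp)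
    have hv : v ∈ Submodule.span R {u, v, w} := Submodule.subset_span (by simp)
    have hw : w ∈ Submodule.span R {u, v, w} := Submodule.subset_span (by simp)
    simp only [Set.insert_subset_iff, Set.singleton_subset_iff, SetLike.mem_coe]
    refine ⟨?_, ?_, ?_, ?_, ?_, ?_⟩ <;>
      apply Submodule.smul_mem <;> simp only [Submodule.add_mem, hu, hv, hw]
  · have hgen : ∀ y ∈ ({c • (u + v), c • (v + w), c • (u + v + w), a • u, b • v, d • w} :
        Set M), y ∈ N := fun y hy ↦ Submodule.subset_span hy
    simp only [Set.mem_insert_iff, Set.mem_singleton_iff, forall_eq_or_imp, forall_eq] at hgen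
    obtain ⟨huv, hvw, huvw, hau, hbv, hdw⟩ := hgen
    have hcu : c • u ∈ N := by
      simpa [smul_add] using N.sub_mem huvw hvw
    have hcw : c • w ∈ N := by
      simpa [smul_add] using N.sub_mem huvw huv
    have hcv : c • v ∈ N := by
      simpa [smul_add] using N.sub_mem huv hcu
    refine Submodule.span_le.2 ?_
    simp only [Set.insert_subset_iff, Set.singleton_subset_iff, SetLike.mem_coe]
    exact ⟨N.mem_of_isCoprime_of_smul_mem ha hau hcu, N.mem_of_isCoprime_of_smul_mem hb hbv hcv,
      N.mem_of_isCoprime_of_smul_mem hd hdw hcw⟩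

theorem span_uV_vV_wV : Submodule.span LZ {uV, vV, wV} = ⊤ := by
  rw [← (Pi.basisFun LZ (Fin 3)).span_eq, Fin.range_fin_succ, Fin.range_fin_succ,
    Fin.range_fin_succ, Set.range_eq_empty]
  simp [uV, vV, wV, Fin.tail]

theorem span_eq_top_general_four_generator_general (m n p : ℕ) :
    Submodule.span LZ
        {(1 - sL) • (uV + vV), (1 - sL) • (vV + wV), (1 - sL) • (uV + vV + wV),
          altSum m • uV, altSum n • vV, altSum p • wV} = ⊤ := by
  rw [span_smul_add_eq_span (isCoprime_altSum_one_sub_sL m) (isCoprime_altSum_one_sub_sL n)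
    (isCoprime_altSum_one_sub_sL p), span_uV_vV_wV]

/-- Let `R = ℤ[s,s⁻¹]`, let `m, n, p` be positive integers and let `u, v, w` be a basis
of the free `R`-module `R³`.  The submodule generated by `(1−s)(u+v)`, `(1−s)(v+w)`,
`(1−s)(u+v+w)`, `(1−s+s²−⋯+s^(2m))u`, `(1−s+s²−⋯+s^(2n))v`, `(1−s+s²−⋯+s^(2p))w` is the
whole module. -/
theorem span_eq_top_general_four_generator (m n p : ℕ) (hm : 0 < m) (hn : 0 < n)
    (hp : 0 < p) :
    Submodule.span LZ
        {(1 - sL) • (uV + vV), (1 - sL) • (vV + wV), (1 - sL) • (uV + vV + wV),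
          altSum m • uV, altSum n • vV, altSum p • wV} = ⊤ :=
  span_eq_top_general_four_generator_general m n p
end

section
/- Let R = ℤ[s, s⁻¹] and consider the free R-module with basis {u, v, w}. The quotient of R·u ⊕ R·v ⊕ R·w by the submodule generated by (1−s)u, (1−s)v, (1−s)(v−u), (1−s+s²)w, (1−s+s²)(w−u), and (1−s+s²)(w−v) is isomorphic to R/(R·(1−s+s²)); in particular its underlying additive group is free abelian of rank 2. -/
open LaurentPolynomial

/-- The submodule of `R³` generated by the six rows of the second differential for the
Artin group of type `D₄`. -/
noncomputable def imD4 : Submodule LZ (Fin 3 → LZ) :=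
  Submodule.span LZ
    {(1 - sL) • uV, (1 - sL) • vV, (1 - sL) • (vV - uV), (1 - sL + sL ^ 2) • wV,
      (1 - sL + sL ^ 2) • (wV - uV), (1 - sL + sL ^ 2) • (wV - vV)}

/-!
Since `s` is a unit and `s² = (1 - s + s²) - (1 - s)`, the generators already produce `u` and `v`,
so the submodule is `R u + R v + R (1 - s + s²) w`, the kernel of reading the `w`-coordinate
modulo `1 - s + s²`. Moreover `R/(1 - s + s²) ≅ ℤ[X]/(X² - X + 1)` because the root of a
polynomial with unit constant coefficient is already invertible, and the latter ring is free of
rank 2 over `ℤ`.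
-/

open Polynomial

namespace AdjoinRoot

variable {R : Type*} [CommRing R] {f : R[X]}

theorem isUnit_root_of_isUnit_coeff_zero_s14 (hf : IsUnit (f.coeff 0)) : IsUnit (root f) := by
  obtain ⟨g, hg⟩ := X_dvd_sub_C (p := f)
  have h : root f * mk f g = -of f (f.coeff 0) := by
    rw [← mk_X, ← map_mul, ← hg, map_sub, mk_self, mk_C, zero_sub]
  exact isUnit_of_mul_isUnit_left (h ▸ (hf.map (of f)).neg)

theorem rank_eq_natDegree [StrongRankCondition R] (hf : f.Monic) :
    Module.rank R (AdjoinRoot f) = f.natDegree := by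
  rw [rank_eq_card_basis (powerBasis' hf).basis, Fintype.card_fin, powerBasis'_dim]

noncomputable def laurentLift (hf : IsUnit (root f)) : R[T;T⁻¹] →ₐ[R] AdjoinRoot f :=
  { LaurentPolynomial.eval₂ (of f) hf.unit with
    commutes' := fun r => by simp [← LaurentPolynomial.C_eq_algebraMap] }

variable (hf : IsUnit (root f))

theorem laurentLift_toLaurent (p : R[X]) : laurentLift hf (toLaurent p) = mk f p := by
  rw [← aeval_eq, aeval_def, algebraMap_eq]
  exact eval₂_toLaurent (of f) hf.unit p

theorem laurentLift_surjective : Function.Surjective (laurentLift hf) := fun y => by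
  obtain ⟨p, rfl⟩ := mk_surjective y
  exact ⟨toLaurent p, laurentLift_toLaurent hf p⟩

theorem ker_laurentLift : RingHom.ker (laurentLift hf) = Ideal.span {toLaurent f} := by
  refine le_antisymm (fun p hp => ?_) ?_
  · obtain ⟨n, q, hq⟩ := p.exists_T_pow
    have hfq : f ∣ q := by
      rw [← mk_eq_zero, ← laurentLift_toLaurent hf, hq, map_mul, RingHom.mem_ker.mp hp, zero_mul]
    obtain ⟨g, rfl⟩ := hfq
    refine Ideal.mem_span_singleton.mpr ⟨toLaurent g * T (-n), ?_⟩
    rw [← mul_assoc, ← map_mul, hq, mul_T_assoc, add_neg_cancel, T_zero, mul_one]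
  · rw [Ideal.span_le, Set.singleton_subset_iff, SetLike.mem_coe, RingHom.mem_ker,
      laurentLift_toLaurent, mk_self]

noncomputable def quotientLaurentEquiv :
    (R[T;T⁻¹] ⧸ Ideal.span {toLaurent f}) ≃ₐ[R] AdjoinRoot f :=
  (Ideal.quotientEquivAlgOfEq R (ker_laurentLift hf).symm).trans
    (Ideal.quotientKerAlgEquivOfSurjective (laurentLift_surjective hf))

end AdjoinRoot

theorem monic_X_sq_sub_X_add_one : (X ^ 2 - X + 1 : ℤ[X]).Monic := by
  rw [show (X ^ 2 - X + 1 : ℤ[X]) = X ^ 2 + (1 - X) by ring]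
  exact monic_X_pow_add ((degree_sub_le _ _).trans_lt (by simp))

theorem natDegree_X_sq_sub_X_add_one : (X ^ 2 - X + 1 : ℤ[X]).natDegree = 2 := by
  compute_degree!

theorem isUnit_root_X_sq_sub_X_add_one : IsUnit (AdjoinRoot.root (X ^ 2 - X + 1 : ℤ[X])) :=
  AdjoinRoot.isUnit_root_of_isUnit_coeff_zero_s14 (by simp)

theorem isUnit_sL : IsUnit sL := isUnit_T 1

theorem toLaurent_X_sq_sub_X_add_one : toLaurent (X ^ 2 - X + 1 : ℤ[X]) = 1 - sL + sL ^ 2 := by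
  simp only [map_add, map_sub, map_pow, toLaurent_X, map_one, sL]
  ring

noncomputable def quotientEquivAdjoinRoot :
    (LZ ⧸ Ideal.span {1 - sL + sL ^ 2}) ≃ₐ[ℤ] AdjoinRoot (X ^ 2 - X + 1 : ℤ[X]) :=
  (Ideal.quotientEquivAlgOfEq ℤ (by rw [toLaurent_X_sq_sub_X_add_one])).trans
    (AdjoinRoot.quotientLaurentEquiv isUnit_root_X_sq_sub_X_add_one)

theorem mem_imD4_of_smul_mem {x : Fin 3 → LZ} (h₁ : (1 - sL) • x ∈ imD4)
    (h₂ : (1 - sL + sL ^ 2) • (wV - x) ∈ imD4) : x ∈ imD4 := by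
  rw [← Submodule.smul_mem_iff_of_isUnit _ (isUnit_sL.pow 2)]
  have h : sL ^ 2 • x = (1 - sL + sL ^ 2) • wV - (1 - sL + sL ^ 2) • (wV - x) - (1 - sL) • x := by
    module
  rw [h]
  exact sub_mem (sub_mem (Submodule.subset_span (by simp)) h₂) h₁

theorem uV_mem_imD4 : uV ∈ imD4 :=
  mem_imD4_of_smul_mem (Submodule.subset_span (by simp)) (Submodule.subset_span (by simp))

theorem vV_mem_imD4 : vV ∈ imD4 :=
  mem_imD4_of_smul_mem (Submodule.subset_span (by simp)) (Submodule.subset_span (by simp))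

noncomputable def wCoordMod : (Fin 3 → LZ) →ₗ[LZ] LZ ⧸ Ideal.span {1 - sL + sL ^ 2} :=
  (Ideal.Quotient.mkₐ LZ (Ideal.span {1 - sL + sL ^ 2})).toLinearMap ∘ₗ LinearMap.proj 2

theorem wCoordMod_surjective : Function.Surjective wCoordMod := fun y => by
  obtain ⟨a, rfl⟩ := Ideal.Quotient.mk_surjective y
  exact ⟨fun _ => a, rfl⟩

theorem mem_ker_wCoordMod {x : Fin 3 → LZ} :
    x ∈ LinearMap.ker wCoordMod ↔ x 2 ∈ Ideal.span {1 - sL + sL ^ 2} :=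
  Ideal.Quotient.eq_zero_iff_mem

theorem imD4_eq_ker_wCoordMod : imD4 = LinearMap.ker wCoordMod := by
  refine le_antisymm (Submodule.span_le.mpr ?_) fun x hx => ?_
  · rintro x (rfl | rfl | rfl | rfl | rfl | rfl) <;>
      rw [SetLike.mem_coe, mem_ker_wCoordMod] <;> simp [uV, vV, wV]
  · obtain ⟨c, hc⟩ := Ideal.mem_span_singleton'.mp (mem_ker_wCoordMod.mp hx)
    have hx : x = x 0 • uV + x 1 • vV + c • (1 - sL + sL ^ 2) • wV := by
      ext i; fin_cases i <;> simp [uV, vV, wV, ← hc, mul_comm]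
    rw [hx]
    exact add_mem (add_mem (Submodule.smul_mem _ _ uV_mem_imD4) (Submodule.smul_mem _ _ vV_mem_imD4))
      (Submodule.smul_mem _ _ (Submodule.subset_span (by simp)))

noncomputable def quotientImD4Equiv :
    ((Fin 3 → LZ) ⧸ imD4) ≃ₗ[LZ] LZ ⧸ Ideal.span {1 - sL + sL ^ 2} :=
  (Submodule.quotEquivOfEq _ _ imD4_eq_ker_wCoordMod).trans
    (wCoordMod.quotKerEquivOfSurjective wCoordMod_surjective)

/-- Let `R = ℤ[s,s⁻¹]` and let `u, v, w` be a basis of the free `R`-module `R³`.  The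
quotient of `R³` by the submodule generated by `(1−s)u`, `(1−s)v`, `(1−s)(v−u)`,
`(1−s+s²)w`, `(1−s+s²)(w−u)` and `(1−s+s²)(w−v)` is isomorphic to `R/(R·(1−s+s²))`; in
particular its underlying additive group is free abelian of rank 2.  (Type `D₄`.) -/
theorem quotient_D4 :
    Nonempty (((Fin 3 → LZ) ⧸ imD4) ≃ₗ[LZ] (LZ ⧸ Ideal.span {1 - sL + sL ^ 2})) ∧
      Module.Free ℤ ((Fin 3 → LZ) ⧸ imD4) ∧
      Module.rank ℤ ((Fin 3 → LZ) ⧸ imD4) = 2 := by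
  let e : ((Fin 3 → LZ) ⧸ imD4) ≃ₗ[ℤ] AdjoinRoot (X ^ 2 - X + 1 : ℤ[X]) :=
    (quotientImD4Equiv.restrictScalars ℤ).trans quotientEquivAdjoinRoot.toLinearEquiv
  have : Module.Free ℤ (AdjoinRoot (X ^ 2 - X + 1 : ℤ[X])) :=
    monic_X_sq_sub_X_add_one.free_adjoinRoot
  refine ⟨⟨quotientImD4Equiv⟩, .of_equiv e.symm, ?_⟩
  rw [e.rank_eq, AdjoinRoot.rank_eq_natDegree monic_X_sq_sub_X_add_one,
    natDegree_X_sq_sub_X_add_one, Nat.cast_ofNat]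
end
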